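/- arXiv:1705.02300 — 3 statements merged into one kernel-verified Lean document; each statement's English description precedes it below -/
import Mathlib

section
/- Let φ : R → S be a homomorphism of commutative rings and let t ∈ R be an element that is a nonzerodivisor on R and whose image φ(t) is a nonzerodivisor on S. If S/tS is faithfully flat as a module over R/tR, then for every integer h ≥ 1 the quotient S/t^hS is faithfully flat as a module over R/t^hR. -/
/-- The statement that `S/rS` is faithfully flat as a module over `R/rR`, where the module structure is
induced by the ring homomorphism `R/rR → S/rS` obtained from `φ : R → S`. -/
def QuotSpanFaithfullyFlat {R S : Type*} [CommRing R] [CommRing S] (φ : R →+* S) (r : R) : Prop :=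
  letI : Algebra (R ⧸ Ideal.span {r}) (S ⧸ Ideal.span {φ r}) :=
    (Ideal.quotientMap (Ideal.span {φ r}) φ (by
      rw [Ideal.span_singleton_le_iff_mem, Ideal.mem_comap]
      exact Ideal.mem_span_singleton_self _)).toAlgebra
  Module.FaithfullyFlat (R ⧸ Ideal.span {r}) (S ⧸ Ideal.span {φ r})

/-!
Faithful flatness of `S ⧸ (φ r)` over `R ⧸ (r)` splits into flatness and the condition that no
maximal ideal of `R` containing `r` generates the unit ideal of `S`. The latter condition only
sees the radical of `(r)`, which is the same for `t` and `t ^ h`.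

Flatness is checked with the equational criterion, lifted to `R` and `S`. A relation
`∑ φ(fᵢ) xᵢ ≡ 0 mod φ(a b)` is first made trivial modulo `a`; the error terms of that are
multiples of `φ a`, and as `φ a` is a nonzerodivisor, dividing by it leaves a relation
modulo `b`, which is made trivial in turn. Taking `a = t ^ h`, `b = t` gives the induction.
-/

theorem Ideal.Quotient.mk_span_singleton_comp_eq_iff {A ι : Type*} [CommRing A] {s : A}
    {u w : ι → A} :
    Ideal.Quotient.mk (Ideal.span {s}) ∘ u = Ideal.Quotient.mk _ ∘ w ↔ ∃ v, u = w + s • v := by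
  simp only [funext_iff, Function.comp_apply, Ideal.Quotient.eq, Ideal.mem_span_singleton',
    Pi.add_apply, Pi.smul_apply, smul_eq_mul]
  constructor
  · intro h
    choose v hv using h
    exact ⟨v, fun i => by linear_combination -hv i⟩
  · rintro ⟨v, hv⟩ i
    exact ⟨v i, by rw [hv]; ring⟩

section QuotSpan

open Matrix

variable {R S : Type*} [CommRing R] [CommRing S] {φ : R →+* S} {r : R}

variable (φ r) in
abbrev quotSpanAlgebra : Algebra (R ⧸ Ideal.span {r}) (S ⧸ Ideal.span {φ r}) :=
  (Ideal.quotientMap _ φ <| Ideal.span_singleton_le_iff_mem _ |>.mpr <|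
    Ideal.mem_comap.mpr <| Ideal.mem_span_singleton_self _).toAlgebra

variable (φ r) in
def QuotSpanFlat : Prop :=
  letI := quotSpanAlgebra φ r
  Module.Flat (R ⧸ Ideal.span {r}) (S ⧸ Ideal.span {φ r})

theorem sum_mk_smul_mk {ι : Type*} [Fintype ι] (f : ι → R) (x : ι → S) :
    letI := quotSpanAlgebra φ r
    ∑ i, Ideal.Quotient.mk (Ideal.span {r}) (f i) • Ideal.Quotient.mk (Ideal.span {φ r}) (x i) =
      Ideal.Quotient.mk _ ((φ ∘ f) ⬝ᵥ x) := by
  simp only [dotProduct, map_sum, map_mul, Function.comp_apply]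
  rfl

theorem map_algebraMap_map_mk (M : Ideal R) :
    letI := quotSpanAlgebra φ r
    (M.map (Ideal.Quotient.mk (Ideal.span {r}))).map
        (algebraMap (R ⧸ Ideal.span {r}) (S ⧸ Ideal.span {φ r})) =
      (M.map φ).map (Ideal.Quotient.mk (Ideal.span {φ r})) := by
  rw [Ideal.map_map, Ideal.map_map]
  rfl

theorem map_map_mk_eq_top_iff {M : Ideal R} (hrM : r ∈ M) :
    (M.map φ).map (Ideal.Quotient.mk (Ideal.span {φ r})) = ⊤ ↔ M.map φ = ⊤ :=
  Ideal.map_eq_top_iff_of_ker_le _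
    (by rw [Ideal.mk_ker, Ideal.span_singleton_le_iff_mem]; exact Ideal.mem_map_of_mem φ hrM)
    (RingHom.isIntegral_of_surjective _ Ideal.Quotient.mk_surjective)

theorem quotSpanFaithfullyFlat_iff :
    QuotSpanFaithfullyFlat φ r ↔
      QuotSpanFlat φ r ∧ ∀ M : Ideal R, M.IsMaximal → r ∈ M → M.map φ ≠ ⊤ := by
  let := quotSpanAlgebra φ r
  refine (Module.faithfullyFlat_iff _ _).trans (and_congr_right fun _ => ?_)
  simp only [Ideal.smul_top_eq_map, ne_eq, Submodule.restrictScalars_eq_top_iff]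
  constructor
  · intro h M hM hrM hMφ
    have : (M.map (Ideal.Quotient.mk (Ideal.span {r}))).IsMaximal :=
      Ideal.IsMaximal.map_of_surjective_of_ker_le Ideal.Quotient.mk_surjective
        (by rwa [Ideal.mk_ker, Ideal.span_singleton_le_iff_mem])
    exact h this (by rw [map_algebraMap_map_mk, map_map_mk_eq_top_iff hrM, hMφ])
  · intro h m hm hmφ
    set M := m.comap (Ideal.Quotient.mk (Ideal.span {r}))
    have hrM : r ∈ M := by
      simp [M, Ideal.Quotient.eq_zero_iff_mem.mpr (Ideal.mem_span_singleton_self r)]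
    refine h M (Ideal.comap_isMaximal_of_surjective _ Ideal.Quotient.mk_surjective) hrM ?_
    rwa [← map_map_mk_eq_top_iff hrM, ← map_algebraMap_map_mk,
      Ideal.map_comap_of_surjective _ Ideal.Quotient.mk_surjective]

variable (φ r) in
def TrivialRelationsMod : Prop :=
  ∀ ⦃ι : Type⦄ [Fintype ι] (f : ι → R) (x : ι → S), φ r ∣ (φ ∘ f) ⬝ᵥ x →
    ∃ (κ : Type) (_ : Fintype κ) (a : Matrix ι κ R) (y : κ → S) (v : ι → S) (g : κ → R),
      x = a.map φ *ᵥ y + φ r • v ∧ f ᵥ* a = r • g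

theorem QuotSpanFlat.trivialRelationsMod (hflat : QuotSpanFlat φ r) :
    TrivialRelationsMod φ r := by
  let := quotSpanAlgebra φ r
  have : Module.Flat (R ⧸ Ideal.span {r}) (S ⧸ Ideal.span {φ r}) := hflat
  intro ι _ f x hfx
  have hrel : ∑ i, Ideal.Quotient.mk (Ideal.span {r}) (f i) •
      Ideal.Quotient.mk (Ideal.span {φ r}) (x i) = 0 := by
    rwa [sum_mk_smul_mk, Ideal.Quotient.eq_zero_iff_mem, Ideal.mem_span_singleton]
  obtain ⟨k, a, y, hxy, hfa⟩ : Module.IsTrivialRelation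
      (fun i => Ideal.Quotient.mk (Ideal.span {r}) (f i))
      (fun i => Ideal.Quotient.mk (Ideal.span {φ r}) (x i)) :=
    Module.Flat.isTrivialRelation_of_sum_smul_eq_zero hrel
  obtain ⟨A, hA⟩ : ∃ A : Matrix ι (Fin k) R, ∀ i j, Ideal.Quotient.mk _ (A i j) = a i j :=
    ⟨_, fun i j => (Ideal.Quotient.mk_surjective (a i j)).choose_spec⟩
  choose Y hY using fun j => Ideal.Quotient.mk_surjective (y j)
  simp only [← hA, ← hY, sum_mk_smul_mk] at hxy
  simp only [← hA] at hfa
  have hxA : Ideal.Quotient.mk _ ∘ x = Ideal.Quotient.mk _ ∘ (A.map φ *ᵥ Y) := funext hxy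
  have hfA : Ideal.Quotient.mk _ ∘ (f ᵥ* A) = Ideal.Quotient.mk (Ideal.span {r}) ∘ (0 : Fin k → R) :=
    funext fun j => by
      simp only [Function.comp_apply, RingHom.map_vecMul, Pi.zero_apply, map_zero]
      exact hfa j
  obtain ⟨v, hv⟩ := Ideal.Quotient.mk_span_singleton_comp_eq_iff.mp hxA
  obtain ⟨g, hg⟩ := Ideal.Quotient.mk_span_singleton_comp_eq_iff.mp hfA
  exact ⟨Fin k, inferInstance, A, Y, v, g, hv, by rw [hg, zero_add]⟩

theorem QuotSpanFlat.of_trivialRelationsMod (hcrit : TrivialRelationsMod φ r) :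
    QuotSpanFlat φ r := by
  let := quotSpanAlgebra φ r
  refine Module.Flat.of_forall_isTrivialRelation fun {l f x} hfx => ?_
  obtain ⟨F, rfl⟩ := Ideal.Quotient.mk_surjective.comp_left f
  obtain ⟨X, rfl⟩ := Ideal.Quotient.mk_surjective.comp_left x
  obtain ⟨κ, _, A, Y, V, G, hX, hG⟩ := hcrit F X <| by
    rwa [← Ideal.mem_span_singleton, ← Ideal.Quotient.eq_zero_iff_mem, ← sum_mk_smul_mk]
  refine Module.isTrivialRelation_iff_vanishesTrivially.mpr <|
    .of_fintype (fun i j => Ideal.Quotient.mk _ (A i j)) (fun j => Ideal.Quotient.mk _ (Y j))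
      (fun i => ?_) (fun j => ?_)
  · rw [sum_mk_smul_mk]
    exact congrFun (Ideal.Quotient.mk_span_singleton_comp_eq_iff.mpr ⟨V, hX⟩) i
  · have hFA := RingHom.map_vecMul (Ideal.Quotient.mk (Ideal.span {r})) A F j
    rw [hG, Pi.smul_apply, smul_eq_mul, map_mul, Ideal.Quotient.eq_zero_iff_mem.mpr
      (Ideal.mem_span_singleton_self r), zero_mul] at hFA
    simpa [vecMul, dotProduct, mul_comm] using hFA.symm

variable (φ) in
theorem trivialRelationsMod_one : TrivialRelationsMod φ 1 := fun _ _ f x _ =>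
  ⟨Empty, inferInstance, 0, 0, x, 0, by simp, Subsingleton.elim _ _⟩

theorem TrivialRelationsMod.mul {a b : R} (ha : TrivialRelationsMod φ a)
    (hb : TrivialRelationsMod φ b) (haS : φ a ∈ nonZeroDivisors S) :
    TrivialRelationsMod φ (a * b) := by
  intro ι _ f x hfx
  obtain ⟨κ, _, A, y, x', g, hx, hg⟩ := ha f x ((map_dvd φ (dvd_mul_right a b)).trans hfx)
  have hφfA : (φ ∘ f) ᵥ* A.map φ = φ a • (φ ∘ g) := by
    ext j
    simp [← RingHom.map_vecMul, hg]
  have hfx' : (φ ∘ f) ⬝ᵥ x = φ a * ((φ ∘ Sum.elim g f) ⬝ᵥ Sum.elim y x') := by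
    rw [hx, dotProduct_add, dotProduct_mulVec, hφfA, Sum.comp_elim, sumElim_dotProduct_sumElim,
      smul_dotProduct, dotProduct_smul, smul_eq_mul, smul_eq_mul, mul_add]
  obtain ⟨κ', _, B, z, w, g', hw, hg'⟩ := hb (Sum.elim g f) (Sum.elim y x') <| by
    obtain ⟨c, hc⟩ := hfx
    refine ⟨c, (mul_cancel_left_mem_nonZeroDivisors haS).mp ?_⟩
    rw [← hfx', hc, map_mul, mul_assoc]
  rw [← fromRows_toRows B, sumElim_vecMul_fromRows] at hg'
  have hy : y = B.toRows₁.map φ *ᵥ z + φ b • (w ∘ Sum.inl) :=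
    funext fun j => congrFun hw (Sum.inl j)
  have hx' : x' = B.toRows₂.map φ *ᵥ z + φ b • (w ∘ Sum.inr) :=
    funext fun i => congrFun hw (Sum.inr i)
  refine ⟨κ' ⊕ κ, inferInstance, fromCols (A * B.toRows₁ + a • B.toRows₂) (b • A),
    Sum.elim z (w ∘ Sum.inl), w ∘ Sum.inr, Sum.elim g' g, ?_, ?_⟩
  · rw [hx, hy, hx', fromCols_map, fromCols_mulVec_sumElim, Matrix.map_add _ (map_add φ),
      Matrix.map_mul, Matrix.map_smulₛₗ φ φ a (map_mul φ a), Matrix.map_smulₛₗ φ φ b (map_mul φ b)]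
    simp only [mulVec_add, mulVec_smul, add_mulVec, smul_mulVec, ← mulVec_mulVec, map_mul]
    module
  · rw [vecMul_fromCols, vecMul_add, ← vecMul_vecMul, hg, vecMul_smul, vecMul_smul, smul_vecMul,
      ← smul_add, hg', hg]
    ext (l | j) <;> simp only [Sum.elim_inl, Sum.elim_inr, Pi.smul_apply, smul_eq_mul] <;> ring

theorem TrivialRelationsMod.pow {t : R} (ht : TrivialRelationsMod φ t)
    (htS : φ t ∈ nonZeroDivisors S) (n : ℕ) : TrivialRelationsMod φ (t ^ n) := by
  induction n with
  | zero => rw [pow_zero]; exact trivialRelationsMod_one φ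
  | succ n ih => rw [pow_succ]; exact ih.mul ht (map_pow φ t n ▸ pow_mem htS n)

end QuotSpan

theorem quotSpanFaithfullyFlat_pow_general {R S : Type*} [CommRing R] [CommRing S] (φ : R →+* S) (t : R)
    (htS : φ t ∈ nonZeroDivisors S)
    (hflat : QuotSpanFaithfullyFlat φ t) :
    ∀ h : ℕ, 1 ≤ h → QuotSpanFaithfullyFlat φ (t ^ h) := by
  intro h _
  obtain ⟨hflat, hmax⟩ := quotSpanFaithfullyFlat_iff.mp hflat
  refine quotSpanFaithfullyFlat_iff.mpr ⟨?_, fun M hM htM => hmax M hM ?_⟩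
  · exact .of_trivialRelationsMod (hflat.trivialRelationsMod.pow htS h)
  · exact hM.isPrime.mem_of_pow_mem h htM

/-- If `t` is a nonzerodivisor on `R`, `φ t` is a nonzerodivisor on `S`, and `S/tS` is faithfully flat
over `R/tR`, then `S/t^hS` is faithfully flat over `R/t^hR` for every `h ≥ 1`. -/
theorem quotSpanFaithfullyFlat_pow {R S : Type*} [CommRing R] [CommRing S] (φ : R →+* S) (t : R)
    (htR : t ∈ nonZeroDivisors R) (htS : φ t ∈ nonZeroDivisors S)
    (hflat : QuotSpanFaithfullyFlat φ t) :
    ∀ h : ℕ, 1 ≤ h → QuotSpanFaithfullyFlat φ (t ^ h) :=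
  quotSpanFaithfullyFlat_pow_general φ t htS hflat
end

section
/- Let R be an integral domain with fraction field K, let z_1, …, z_m ∈ R be nonzero elements generating the ideal J = (z_1, …, z_m), and let f ∈ R be integral over J, i.e., there exist n ≥ 1 and elements a_1, …, a_n ∈ R with a_j ∈ J^j for each j and f^n + a_1 f^{n-1} + ⋯ + a_{n-1} f + a_n = 0. Then for each i, the element f/z_i of K is integral over the R-subalgebra R[z_1/z_i, …, z_m/z_i] of K generated by the elements z_1/z_i, …, z_m/z_i. -/
/-!
An element `y ∈ J ^ j` is a sum of products of `j` generators, so `y / z_i ^ j` is a polynomial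
in the `z_k / z_i`. Dividing the equation `f ^ n + ∑ a_j f ^ (n - j) = 0` by `z_i ^ n` therefore
gives a monic equation for `f / z_i` whose coefficients `a_j / z_i ^ j` lie in
`R[z_1/z_i, …, z_m/z_i]`.
-/

open Polynomial

theorem degree_sum_Icc_C_mul_X_pow_sub_lt {K : Type*} [Semiring K] (n : ℕ) (c : ℕ → K) :
    (∑ j ∈ Finset.Icc 1 n, C (c j) * X ^ (n - j)).degree < (n : WithBot ℕ) := by
  refine (degree_sum_le _ _).trans_lt <| (Finset.sup_lt_iff (WithBot.bot_lt_coe n)).2 ?_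
  intro j hj
  refine (degree_C_mul_X_pow_le _ _).trans_lt ?_
  exact WithBot.coe_lt_coe.2 <| Nat.sub_lt_self (Finset.mem_Icc.1 hj).1 (Finset.mem_Icc.1 hj).2

theorem isIntegral_of_pow_add_sum_Icc_eq_zero {A K : Type*} [CommRing A] [CommRing K]
    [Algebra A K] {x : K} {n : ℕ} (c : ℕ → K)
    (hc : ∀ j ∈ Finset.Icc 1 n, c j ∈ Set.range (algebraMap A K))
    (hx : x ^ n + ∑ j ∈ Finset.Icc 1 n, c j * x ^ (n - j) = 0) : IsIntegral A x := by
  set p : K[X] := X ^ n + ∑ j ∈ Finset.Icc 1 n, C (c j) * X ^ (n - j)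
  have hp_lifts : p ∈ lifts (algebraMap A K) :=
    add_mem (X_pow_mem_lifts _ n) <| sum_mem fun j hj =>
      mul_mem (C'_mem_lifts (hc j hj)) (X_pow_mem_lifts _ _)
  have hp_monic : p.Monic := monic_X_pow_add (degree_sum_Icc_C_mul_X_pow_sub_lt n c)
  obtain ⟨q, hqp, -, hq⟩ := lifts_and_natDegree_eq_and_monic hp_lifts hp_monic
  refine ⟨q, hq, ?_⟩
  rw [← aeval_def, ← aeval_map_algebraMap K, hqp]
  simpa [p, eval_finsetSum] using hx

section Adjoin

variable {R K ι : Type*} [CommSemiring R] [Semifield K] [Algebra R K] (z : ι → R) (u : K)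

theorem algebraMap_div_mem_adjoin_of_mem_span {y : R} (hy : y ∈ Ideal.span (Set.range z)) :
    algebraMap R K y / u ∈ Algebra.adjoin R (Set.range fun k => algebraMap R K (z k) / u) := by
  induction hy using Submodule.span_induction with
  | mem _ h =>
    obtain ⟨k, rfl⟩ := h
    exact Algebra.subset_adjoin ⟨k, rfl⟩
  | zero => simp
  | add _ _ _ _ h₁ h₂ =>
    rw [map_add, add_div]
    exact add_mem h₁ h₂
  | smul r _ _ h =>
    rw [smul_eq_mul, map_mul, mul_div_assoc, ← Algebra.smul_def]
    exact Subalgebra.smul_mem _ h r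

theorem algebraMap_div_pow_mem_adjoin_of_mem_span_pow {j : ℕ} {y : R}
    (hy : y ∈ Ideal.span (Set.range z) ^ j) :
    algebraMap R K y / u ^ j ∈ Algebra.adjoin R (Set.range fun k => algebraMap R K (z k) / u) := by
  induction j generalizing y with
  | zero => simp
  | succ j ih =>
    rw [pow_succ] at hy
    induction hy using Submodule.mul_induction_on' with
    | mem_mul_mem p hp q hq =>
      rw [map_mul, pow_succ, ← div_mul_div_comm]
      exact mul_mem (ih hp) (algebraMap_div_mem_adjoin_of_mem_span z u hq)
    | add _ _ _ _ h₁ h₂ =>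
      rw [map_add, add_div]
      exact add_mem h₁ h₂

end Adjoin

theorem div_pow_add_sum_Icc_div_pow_mul {K : Type*} [Semifield K] (x u : K) (c : ℕ → K) (n : ℕ) :
    (x / u) ^ n + ∑ j ∈ Finset.Icc 1 n, c j / u ^ j * (x / u) ^ (n - j) =
      (x ^ n + ∑ j ∈ Finset.Icc 1 n, c j * x ^ (n - j)) / u ^ n := by
  rw [add_div, Finset.sum_div, div_pow]
  congr 1
  refine Finset.sum_congr rfl fun j hj => ?_
  rw [div_pow, div_mul_div_comm, ← pow_add, Nat.add_sub_cancel' (Finset.mem_Icc.1 hj).2]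

theorem div_isIntegral_adjoin_of_isIntegral_over_ideal_general {R : Type*} [CommRing R] [IsDomain R]
    {m : ℕ} (z : Fin m → R) (f : R)
    (n : ℕ) (a : ℕ → R)
    (ha : ∀ j ∈ Finset.Icc 1 n, a j ∈ (Ideal.span (Set.range z)) ^ j)
    (heq : f ^ n + ∑ j ∈ Finset.Icc 1 n, a j * f ^ (n - j) = 0)
    (i : Fin m) :
    IsIntegral
      (Algebra.adjoin R (Set.range fun j : Fin m =>
        algebraMap R (FractionRing R) (z j) / algebraMap R (FractionRing R) (z i)))
      (algebraMap R (FractionRing R) f / algebraMap R (FractionRing R) (z i)) := by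
  set φ := algebraMap R (FractionRing R)
  have hcoeff : ∀ j ∈ Finset.Icc 1 n, φ (a j) / φ (z i) ^ j ∈ Algebra.adjoin R
      (Set.range fun k => φ (z k) / φ (z i)) := fun j hj =>
    algebraMap_div_pow_mem_adjoin_of_mem_span_pow z _ (ha j hj)
  refine isIntegral_of_pow_add_sum_Icc_eq_zero (fun j => φ (a j) / φ (z i) ^ j)
    (fun j hj => ⟨⟨_, hcoeff j hj⟩, rfl⟩) ?_
  rw [div_pow_add_sum_Icc_div_pow_mul]
  simp only [← map_pow, ← map_mul, ← map_sum, ← map_add, heq, map_zero, zero_div]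

/-- Key computation in Lemma A.2 (`lem.IntegralElementPartialNormalization`): if `f ∈ R` is
integral over the ideal `J = (z_1, …, z_m)`, then on each chart of the blowup of `J` the
element `f / z_i` is integral over `R[z_1/z_i, …, z_m/z_i]`. -/
theorem div_isIntegral_adjoin_of_isIntegral_over_ideal {R : Type*} [CommRing R] [IsDomain R]
    {m : ℕ} (z : Fin m → R) (hz : ∀ i, z i ≠ 0) (f : R)
    (n : ℕ) (hn : 1 ≤ n) (a : ℕ → R)
    (ha : ∀ j ∈ Finset.Icc 1 n, a j ∈ (Ideal.span (Set.range z)) ^ j)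
    (heq : f ^ n + ∑ j ∈ Finset.Icc 1 n, a j * f ^ (n - j) = 0)
    (i : Fin m) :
    IsIntegral
      (Algebra.adjoin R (Set.range fun j : Fin m =>
        algebraMap R (FractionRing R) (z j) / algebraMap R (FractionRing R) (z i)))
      (algebraMap R (FractionRing R) f / algebraMap R (FractionRing R) (z i)) :=
  div_isIntegral_adjoin_of_isIntegral_over_ideal_general z f n a ha heq i
end

section
/- Let R be an integrally closed integral domain with fraction field K, let z_1, …, z_m ∈ R be nonzero elements generating the ideal J = (z_1, …, z_m), fix an index i, and let R_i = R[z_1/z_i, …, z_m/z_i] ⊆ K be the R-subalgebra generated by z_1/z_i, …, z_m/z_i. If x ∈ K is integral over R_i, then there exist an integer h ≥ 1 and an element u ∈ R such that x = u/z_i^h in K and u is integral over the ideal J^h, i.e., there exist l ≥ 1 and elements b_1, …, b_l ∈ R with b_j ∈ (J^h)^j for each j and u^l + b_1 u^{l-1} + ⋯ + b_l = 0. -/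
/-!
Every element `s` of the chart `R[J / z_i]` satisfies `s * z_i ^ n ∈ J ^ n` for all large `n`.
Scaling an integral equation of `x` over the chart by a large common power `z_i ^ H` therefore
gives a monic equation for `z_i ^ H * x` whose coefficient of `X ^ (l - j)` lies in `(J ^ H) ^ j`.
Its coefficients lie in `R`, so `z_i ^ H * x` is integral over `R`, hence equal to some `u ∈ R`
as `R` is integrally closed, and the same equation, read in `R`, shows `u` integral over `J ^ H`.
-/

open Polynomial Filter

/-- For `M` an ideal of `R` this is `y` being integral over `M`, phrased through the monic
polynomial instead of its list of coefficients. -/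
def IsIntegralOverSubmodule {R A : Type*} [CommSemiring R] [Semiring A] [Algebra R A]
    (M : Submodule R A) (y : A) : Prop :=
  ∃ q : A[X], q.Monic ∧ q.eval y = 0 ∧ ∀ k, q.coeff k ∈ M ^ (q.natDegree - k)

namespace Submodule

section BlowupChart

variable {R A : Type*} [CommSemiring R] [CommSemiring A] [Algebra R A] {M : Submodule R A}
  {t : A}

/-- For a nonzerodivisor `t ∈ M` this is the affine chart `R[M / t] = ⋃ₙ M ^ n / t ^ n` of the
blowup of `M`. -/
def blowupChart (M : Submodule R A) (ht : t ∈ M) : Subalgebra R A where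
  carrier := {y | ∀ᶠ n in atTop, y * t ^ n ∈ M ^ n}
  mul_mem' {a b} ha hb := by
    obtain ⟨N, hN⟩ := eventually_atTop.mp ha
    filter_upwards [(tendsto_sub_atTop_nat N).eventually hb, eventually_ge_atTop N]
      with n hb hn
    have hsplit : n = N + (n - N) := by omega
    rw [hsplit, pow_add, pow_add, mul_mul_mul_comm]
    exact mul_mem_mul (hN N le_rfl) hb
  add_mem' ha hb := by
    filter_upwards [ha, hb] with n ha hb
    rw [add_mul]
    exact add_mem ha hb
  algebraMap_mem' r := Eventually.of_forall fun n => by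
    rw [← Algebra.smul_def]
    exact smul_mem _ r (pow_mem_pow M ht n)

theorem adjoin_le_blowupChart (ht : t ∈ M) {s : Set A} (hs : ∀ g ∈ s, g * t ∈ M) :
    Algebra.adjoin R s ≤ M.blowupChart ht := by
  refine Algebra.adjoin_le fun g hg => ?_
  filter_upwards [eventually_ge_atTop 1] with n hn
  obtain ⟨k, rfl⟩ := Nat.exists_eq_add_of_le' hn
  rw [pow_succ' t, ← mul_assoc, pow_succ' M]
  exact mul_mem_mul (hs g hg) (pow_mem_pow M ht k)

end BlowupChart

theorem exists_isIntegralOverSubmodule_pow_mul {R A : Type*} [CommRing R] [CommRing A]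
    [Algebra R A] {M : Submodule R A} {t : A} (ht : t ∈ M) {S : Subalgebra R A}
    (hS : S ≤ M.blowupChart ht) {x : A} (hx : IsIntegral S x) :
    ∃ H, 1 ≤ H ∧ IsIntegralOverSubmodule (M ^ H) (t ^ H * x) := by
  obtain ⟨p, hp, hpx⟩ := hx
  set q := p.map (algebraMap S A)
  have hq : q.Monic := hp.map _
  have hcoeff : ∀ k, q.coeff k ∈ M.blowupChart ht := fun k => by
    rw [coeff_map]
    exact hS (p.coeff k).2
  obtain ⟨N, hN⟩ := eventually_atTop.mp <|
    (eventually_all_finset (Finset.range q.natDegree)).mpr fun k _ => hcoeff k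
  refine ⟨N + 1, by omega, q.scaleRoots (t ^ (N + 1)), (monic_scaleRoots_iff _).mpr hq,
    by rw [scaleRoots_eval_mul, eval_map, hpx, mul_zero], fun k => ?_⟩
  rw [coeff_scaleRoots, natDegree_scaleRoots, ← pow_mul, ← pow_mul]
  rcases lt_or_ge k q.natDegree with hk | hk
  · have hNle : N ≤ (N + 1) * (q.natDegree - k) :=
      N.le_succ.trans (Nat.le_mul_of_pos_right _ (Nat.sub_pos_of_lt hk))
    exact hN _ hNle k (Finset.mem_range.mpr hk)
  · simp only [Nat.sub_eq_zero_of_le hk, mul_zero, pow_zero, mul_one]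
    rcases hk.eq_or_lt with rfl | hk
    · rw [hq.coeff_natDegree]
      exact one_le.mp le_rfl
    · rw [coeff_eq_zero_of_natDegree_lt hk]
      exact zero_mem _

theorem map_linearMap_pow {R A : Type*} [CommSemiring R] [Semiring A] [Algebra R A]
    (I : Ideal R) (n : ℕ) :
    map (Algebra.linearMap R A) (I ^ n) = map (Algebra.linearMap R A) I ^ n :=
  Submodule.map_pow I (Algebra.ofId R A) n

end Submodule

namespace IsIntegralOverSubmodule

theorem exists_algebraMap_eq {R A : Type*} [CommRing R] [CommRing A] [Algebra R A]
    [IsIntegrallyClosedIn R A] {I : Ideal R} {y : A}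
    (hy : IsIntegralOverSubmodule (Submodule.map (Algebra.linearMap R A) I) y) :
    ∃ u, algebraMap R A u = y ∧ IsIntegralOverSubmodule I u := by
  obtain ⟨q, hq, hqy, hcoeff⟩ := hy
  simp_rw [← Submodule.map_linearMap_pow, Submodule.mem_map, Algebra.linearMap_apply] at hcoeff
  obtain ⟨p, hpq, hdeg, hp⟩ := lifts_and_natDegree_eq_and_monic
    ((lifts_iff_coeff_lifts q).mpr fun k => (hcoeff k).imp fun _ => And.right) hq
  have hinj : Function.Injective (algebraMap R A) := IsIntegralClosure.algebraMap_injective R R A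
  have hpcoeff : ∀ k, p.coeff k ∈ I ^ (p.natDegree - k) := fun k => by
    obtain ⟨c, hc, hcq⟩ := hcoeff k
    have hcp : c = p.coeff k := hinj (by rw [hcq, ← hpq, coeff_map])
    rwa [hdeg, ← hcp]
  have hy : IsIntegral R y := ⟨p, hp, by rw [← eval_map, hpq, hqy]⟩
  obtain ⟨u, rfl⟩ := IsIntegrallyClosedIn.isIntegral_iff.mp hy
  refine ⟨u, rfl, p, hp, hinj ?_, hpcoeff⟩
  rw [← eval₂_at_apply, ← eval_map, hpq, hqy, map_zero]

theorem exists_pow_add_sum_eq_zero {R : Type*} [CommRing R] [Nontrivial R] {I : Ideal R}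
    {u : R} (hu : IsIntegralOverSubmodule I u) :
    ∃ l, 1 ≤ l ∧ ∃ b : ℕ → R, (∀ j ∈ Finset.Icc 1 l, b j ∈ I ^ j) ∧
      u ^ l + ∑ j ∈ Finset.Icc 1 l, b j * u ^ (l - j) = 0 := by
  obtain ⟨q, hq, hqu, hcoeff⟩ := hu
  set n := q.natDegree
  have hn : 1 ≤ n := by
    by_contra! h
    rw [Nat.lt_one_iff, hq.natDegree_eq_zero] at h
    simp [h] at hqu
  refine ⟨n, hn, fun j => q.coeff (n - j), fun j hj => ?_, ?_⟩
  · simpa only [Nat.sub_sub_self (Finset.mem_Icc.mp hj).2] using hcoeff (n - j)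
  · rw [eval_eq_sum_range, Finset.sum_range_succ, hq.coeff_natDegree, one_mul, add_comm] at hqu
    rw [← hqu]
    congr 1
    refine Finset.sum_nbij' (n - ·) (n - ·) ?_ ?_ ?_ ?_ fun _ _ => rfl <;>
      intro j hj <;> simp only [Finset.mem_Icc, Finset.mem_range] at hj ⊢ <;> omega

end IsIntegralOverSubmodule

/-- Key computation in Lemma A.3 (`lem.BlowupOfNormalizedIdealPower`): if `R` is an integrally
closed domain, `J = (z_1, …, z_m)` with the `z_i` nonzero, and `x ∈ Frac R` is integral over
the chart `R_i = R[z_1/z_i, …, z_m/z_i]` of the blowup of `J`, then `x = u / z_i^h` for some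
`h ≥ 1` and some `u ∈ R` integral over the ideal `J^h`. -/
theorem exists_num_integral_over_pow_of_isIntegral_chart {R : Type*} [CommRing R] [IsDomain R]
    [IsIntegrallyClosed R] {m : ℕ} (z : Fin m → R) (hz : ∀ i, z i ≠ 0) (i : Fin m)
    (x : FractionRing R)
    (hx : IsIntegral
      (Algebra.adjoin R (Set.range fun j : Fin m =>
        algebraMap R (FractionRing R) (z j) / algebraMap R (FractionRing R) (z i))) x) :
    ∃ h : ℕ, 1 ≤ h ∧ ∃ u : R,
      x = algebraMap R (FractionRing R) u / (algebraMap R (FractionRing R) (z i)) ^ h ∧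
      ∃ l : ℕ, 1 ≤ l ∧ ∃ b : ℕ → R,
        (∀ j ∈ Finset.Icc 1 l, b j ∈ ((Ideal.span (Set.range z)) ^ h) ^ j) ∧
        u ^ l + ∑ j ∈ Finset.Icc 1 l, b j * u ^ (l - j) = 0 := by
  set φ := algebraMap R (FractionRing R)
  set J := Ideal.span (Set.range z)
  set M := Submodule.map (Algebra.linearMap R (FractionRing R)) J
  have hzM : ∀ j, φ (z j) ∈ M := fun j =>
    Submodule.mem_map_of_mem (Ideal.subset_span ⟨j, rfl⟩)
  have hzi : φ (z i) ≠ 0 := (map_ne_zero_iff _ (IsFractionRing.injective R _)).mpr (hz i)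
  have hchart := Submodule.adjoin_le_blowupChart (hzM i)
    (s := Set.range fun j => φ (z j) / φ (z i))
    (by rintro _ ⟨j, rfl⟩; rw [div_mul_cancel₀ _ hzi]; exact hzM j)
  obtain ⟨H, hH, hint⟩ := Submodule.exists_isIntegralOverSubmodule_pow_mul (hzM i) hchart hx
  rw [← Submodule.map_linearMap_pow] at hint
  obtain ⟨u, hu, huJ⟩ := hint.exists_algebraMap_eq
  exact ⟨H, hH, u, by rw [hu, eq_div_iff (pow_ne_zero H hzi), mul_comm],
    huJ.exists_pow_add_sum_eq_zero⟩
end
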